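/- Let n ≥ 1 be an integer and define f_{V_n}(v) = sin( 2n · arcsin v )² / ( π n (1 − v²)^{3/2} ) for v ∈ (0,1). Then the expectation of the corresponding speed satisfies ∫_0^1 v · f_{V_n}(v) dv = (4/π) Σ_{h=1}^{n} ( 1/(4h−3) − 1/(4h−1) ). -/

import Mathlib

/-!
Substituting `θ = arcsin v`, the integrand `v f_{V_n}(v)` is `(πn)⁻¹` times the derivative of
`F(θ) = sin²(2nθ) / cos θ - 4n Σ_{k<2n} (-1)ᵏ cos((2k+1)θ) / (2k+1)`.
Everything rests on the telescoping identity `2 cos θ Σ_{k<m} (-1)ᵏ sin((2k+1)θ) = -(-1)ᵐ sin(2mθ)`: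
for `m = n` it shows that `sin(2nθ) / cos θ` is a trigonometric polynomial, so `F` is continuous at
`θ = π/2`, where it vanishes; for `m = 2n` it cancels the cross term of `F'`. At `θ = 0`, `F` is
`-4n` times the partial Leibniz sum `Σ_{k<2n} (-1)ᵏ / (2k+1)`, whose terms pair up into the stated
sum. The integrand is nonnegative, so the improper integral needs no separate integrability bound.
-/

open Real

/-- The probability density `f_{V_n}(v) = sin(2n arcsin v)² / (πn (1−v²)^{3/2})` of the
time-of-flight speed `V_n` of the cursor prepared in the launch-pad state `|c_n⟩`. -/
noncomputable def launchpadSpeedDensity (n : ℕ) (v : ℝ) : ℝ :=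
  Real.sin (2 * n * Real.arcsin v) ^ 2 / (π * n * (1 - v ^ 2) ^ ((3 : ℝ) / 2))

open Finset Set Filter Topology

namespace LaunchpadSpeed

noncomputable section

def altSinSum (m : ℕ) (θ : ℝ) : ℝ :=
  ∑ k ∈ range m, (-1) ^ k * sin ((2 * k + 1) * θ)

def altCosSum (m : ℕ) (θ : ℝ) : ℝ :=
  ∑ k ∈ range m, (-1) ^ k * cos ((2 * k + 1) * θ) / (2 * k + 1)

theorem two_mul_cos_mul_altSinSum (m : ℕ) (θ : ℝ) :
    2 * cos θ * altSinSum m θ = -(-1) ^ m * sin (2 * m * θ) := by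
  induction m with
  | zero => simp [altSinSum]
  | succ m ih =>
    rw [altSinSum, sum_range_succ, mul_add, ← altSinSum, ih]
    have h₁ : 2 * ((m : ℝ) + 1) * θ = (2 * m + 1) * θ + θ := by ring
    have h₂ : 2 * (m : ℝ) * θ = (2 * m + 1) * θ - θ := by ring
    push_cast
    rw [h₁, h₂, sin_add, sin_sub]
    ring

theorem hasDerivAt_altCosSum (m : ℕ) (θ : ℝ) :
    HasDerivAt (altCosSum m) (-altSinSum m θ) θ := by
  unfold altCosSum altSinSum
  rw [← sum_neg_distrib]
  refine HasDerivAt.fun_sum fun k _ => ?_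
  have hk : (2 * k + 1 : ℝ) ≠ 0 := by positivity
  refine ((((hasDerivAt_id' θ).const_mul (2 * (k : ℝ) + 1)).cos).const_mul
    ((-1 : ℝ) ^ k)).div_const (2 * (k : ℝ) + 1) |>.congr_deriv ?_
  field_simp

theorem altCosSum_pi_div_two (m : ℕ) : altCosSum m (π / 2) = 0 := by
  refine sum_eq_zero fun k _ => ?_
  rw [show (2 * (k : ℝ) + 1) * (π / 2) = k * π + π / 2 by ring, cos_add_pi_div_two,
    sin_nat_mul_pi]
  simp

theorem altCosSum_zero (m : ℕ) : altCosSum m 0 = ∑ k ∈ range m, (-1 : ℝ) ^ k / (2 * k + 1) := by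
  simp [altCosSum]

theorem sum_range_two_mul_neg_one_pow_div (n : ℕ) :
    ∑ k ∈ range (2 * n), (-1 : ℝ) ^ k / (2 * k + 1) =
      ∑ h ∈ Icc 1 n, (1 / (4 * (h : ℝ) - 3) - 1 / (4 * (h : ℝ) - 1)) := by
  induction n with
  | zero => simp
  | succ n ih =>
    rw [show 2 * (n + 1) = 2 * n + 1 + 1 by ring, sum_range_succ, sum_range_succ, ih,
      sum_Icc_succ_top (by omega : 1 ≤ n + 1)]
    push_cast
    rw [pow_succ, pow_mul]
    norm_num
    ring

/-- `F(θ) = sin²(2nθ) / cos θ - 4n altCosSum (2n) θ`, with the quotient expanded by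
`two_mul_cos_mul_altSinSum` so that `F` is continuous where `cos θ = 0`. -/
def launchpadPrimitive (n : ℕ) (θ : ℝ) : ℝ :=
  -(-1) ^ n * 2 * sin (2 * n * θ) * altSinSum n θ - 4 * n * altCosSum (2 * n) θ

theorem launchpadPrimitive_eq_of_cos_ne_zero (n : ℕ) {θ : ℝ} (hθ : cos θ ≠ 0) :
    launchpadPrimitive n θ = sin (2 * n * θ) ^ 2 / cos θ - 4 * n * altCosSum (2 * n) θ := by
  have h := two_mul_cos_mul_altSinSum n θ
  have hsq : ((-1 : ℝ) ^ n) ^ 2 = 1 := by rw [← pow_mul, mul_comm, pow_mul]; simp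
  rw [launchpadPrimitive, sub_left_inj, eq_div_iff hθ]
  linear_combination (-(-1) ^ n * sin (2 * n * θ)) * h + sin (2 * n * θ) ^ 2 * hsq

theorem hasDerivAt_launchpadPrimitive (n : ℕ) {θ : ℝ} (hθ : cos θ ≠ 0) :
    HasDerivAt (launchpadPrimitive n) (sin θ * sin (2 * n * θ) ^ 2 / cos θ ^ 2) θ := by
  have heq : launchpadPrimitive n =ᶠ[𝓝 θ]
      fun φ => sin (2 * n * φ) ^ 2 / cos φ - 4 * n * altCosSum (2 * n) φ := by
    filter_upwards [continuous_cos.continuousAt.eventually_ne hθ] with φ hφ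
    exact launchpadPrimitive_eq_of_cos_ne_zero n hφ
  refine HasDerivAt.congr_of_eventuallyEq ?_ heq
  have hsin := ((hasDerivAt_id' θ).const_mul (2 * (n : ℝ))).sin.pow 2
  have hquot := (hsin.div (hasDerivAt_cos θ) hθ).sub
    ((hasDerivAt_altCosSum (2 * n) θ).const_mul (4 * (n : ℝ)))
  refine hquot.congr_deriv ?_
  have h := two_mul_cos_mul_altSinSum (2 * n) θ
  have hdouble : sin (2 * (2 * n : ℕ) * θ) = 2 * sin (2 * n * θ) * cos (2 * n * θ) := by
    rw [← sin_two_mul]; push_cast; ring_nf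
  rw [hdouble, pow_mul, neg_one_sq, one_pow] at h
  simp only [Pi.pow_apply]
  field_simp
  linear_combination (2 * n * cos θ) * h

theorem hasDerivAt_launchpadPrimitive_arcsin (n : ℕ) {v : ℝ} (hv : v ∈ Ioo (-1 : ℝ) 1) :
    HasDerivAt (fun v => launchpadPrimitive n (arcsin v))
      (v * sin (2 * n * arcsin v) ^ 2 / (1 - v ^ 2) ^ ((3 : ℝ) / 2)) v := by
  have hpos : 0 < 1 - v ^ 2 := by nlinarith [hv.1, hv.2]
  have hcos : cos (arcsin v) = √(1 - v ^ 2) := cos_arcsin v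
  have hsqrt : 0 < √(1 - v ^ 2) := sqrt_pos.mpr hpos
  have hpow : (1 - v ^ 2) ^ ((3 : ℝ) / 2) = √(1 - v ^ 2) ^ 3 := by
    rw [sqrt_eq_rpow, ← rpow_mul_natCast hpos.le]; norm_num
  refine ((hasDerivAt_launchpadPrimitive n (hcos ▸ hsqrt.ne')).comp v
    (hasDerivAt_arcsin hv.1.ne' hv.2.ne)).congr_deriv ?_
  rw [hpow, hcos, sin_arcsin hv.1.le hv.2.le]
  field_simp

theorem continuous_launchpadPrimitive (n : ℕ) : Continuous (launchpadPrimitive n) := by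
  unfold launchpadPrimitive altSinSum altCosSum
  fun_prop

theorem launchpadPrimitive_pi_div_two (n : ℕ) : launchpadPrimitive n (π / 2) = 0 := by
  rw [launchpadPrimitive, altCosSum_pi_div_two, show 2 * (n : ℝ) * (π / 2) = n * π by ring,
    sin_nat_mul_pi]
  simp

theorem launchpadPrimitive_zero (n : ℕ) :
    launchpadPrimitive n 0 = -(4 * n * ∑ k ∈ range (2 * n), (-1 : ℝ) ^ k / (2 * k + 1)) := by
  simp [launchpadPrimitive, altCosSum_zero]

theorem integral_mul_sin_sq_div_rpow (n : ℕ) :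
    ∫ v in (0 : ℝ)..1, v * sin (2 * n * arcsin v) ^ 2 / (1 - v ^ 2) ^ ((3 : ℝ) / 2) =
      4 * n * ∑ k ∈ range (2 * n), (-1 : ℝ) ^ k / (2 * k + 1) := by
  have hcont : ContinuousOn (fun v => launchpadPrimitive n (arcsin v)) (Icc 0 1) :=
    ((continuous_launchpadPrimitive n).comp continuous_arcsin).continuousOn
  have hderiv : ∀ v ∈ Ioo (0 : ℝ) 1, HasDerivAt (fun v => launchpadPrimitive n (arcsin v))
      (v * sin (2 * n * arcsin v) ^ 2 / (1 - v ^ 2) ^ ((3 : ℝ) / 2)) v :=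
    fun v hv => hasDerivAt_launchpadPrimitive_arcsin n ⟨by linarith [hv.1], hv.2⟩
  have hnonneg : ∀ v ∈ Ioo (0 : ℝ) 1,
      0 ≤ v * sin (2 * n * arcsin v) ^ 2 / (1 - v ^ 2) ^ ((3 : ℝ) / 2) :=
    fun v hv =>
      div_nonneg (by have := hv.1; positivity) (rpow_nonneg (by nlinarith [hv.1, hv.2]) _)
  rw [intervalIntegral.integral_eq_sub_of_hasDerivAt_of_le zero_le_one hcont hderiv
    ((intervalIntegrable_iff_integrableOn_Ioc_of_le zero_le_one).2
      (intervalIntegral.integrableOn_deriv_of_nonneg hcont hderiv hnonneg)),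
    arcsin_one, arcsin_zero, launchpadPrimitive_pi_div_two, launchpadPrimitive_zero, zero_sub,
    neg_neg]

end

end LaunchpadSpeed

theorem launchpadSpeedDensity_mean (n : ℕ) :
    (∫ v in (0:ℝ)..1, v * launchpadSpeedDensity n v) =
      (4 / π) * ∑ h ∈ Finset.Icc 1 n, (1 / (4 * (h : ℝ) - 3) - 1 / (4 * (h : ℝ) - 1)) := by
  rcases n.eq_zero_or_pos with rfl | hn
  · simp [launchpadSpeedDensity]
  have hdensity : ∀ v, v * launchpadSpeedDensity n v =
      (π * n)⁻¹ * (v * sin (2 * n * arcsin v) ^ 2 / (1 - v ^ 2) ^ ((3 : ℝ) / 2)) := fun v => by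
    rw [launchpadSpeedDensity]; ring
  simp_rw [hdensity]
  rw [intervalIntegral.integral_const_mul, LaunchpadSpeed.integral_mul_sin_sq_div_rpow,
    LaunchpadSpeed.sum_range_two_mul_neg_one_pow_div]
  field_simp
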